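/- (Utility of perturb-and-project) Let S ⊆ ℝⁿ be a nonempty compact convex set, let ε, δ ∈ (0,1], Δ > 0, and let W ∼ N(0, σ²·Id_n) with σ² = 2·log(2/δ)·Δ²/ε². Then for every A ∈ ℝⁿ, the output Π̂ := Π_S(A + W) satisfies E ‖Π̂ − Π_S(A)‖² ≤ (8·√(log(2/δ))/(3ε))·Δ·G(S). -/

import Mathlib

open MeasureTheory ProbabilityTheory

/-- The standard Gaussian measure `N(0, Id_n)` on `ℝⁿ = EuclideanSpace ℝ (Fin n)`. -/
noncomputable def stdGaussianE (n : ℕ) : Measure (EuclideanSpace ℝ (Fin n)) :=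
  (Measure.pi fun _ : Fin n => gaussianReal 0 1).map
    (MeasurableEquiv.toLp 2 (Fin n → ℝ))

/-- The Gaussian measure `N(0, v·Id_n)` on `ℝⁿ` with coordinate variance `v`. -/
noncomputable def gaussianE (n : ℕ) (v : NNReal) : Measure (EuclideanSpace ℝ (Fin n)) :=
  (Measure.pi fun _ : Fin n => gaussianReal 0 v).map
    (MeasurableEquiv.toLp 2 (Fin n → ℝ))

/-- Gaussian complexity `G(S) = E_{W ∼ N(0,Id_n)} sup_{X ∈ S} ⟨X, W⟩`. -/
noncomputable def gaussComplexity {n : ℕ} (S : Set (EuclideanSpace ℝ (Fin n))) : ℝ :=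
  ∫ w, (⨆ X ∈ S, (inner ℝ X w : ℝ)) ∂(stdGaussianE n)

/-! Projection onto a closed convex set is firmly nonexpansive:
`‖Π(A + W) - Π(A)‖² ≤ ⟪Π(A + W), W⟫ - ⟪Π(A), W⟫`. The first term is at most
`sup_{X ∈ S} ⟪X, W⟫`, whose expectation under `W = σ • Z` is `σ · G(S)` by positive homogeneity,
and the second has mean zero. It remains to note `σ = √2 · √(log (2/δ)) · Δ/ε` and `√2 ≤ 8/3`. -/

open Bornology
open scoped RealInnerProductSpace

section SupportFunction

variable {E : Type*} [NormedAddCommGroup E] [InnerProductSpace ℝ E] {S : Set E}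

/-- For `X ∉ S` the inner supremum is `sSup ∅ = 0`, so for `S ≠ univ` this is
`max (sup_{X ∈ S} ⟪X, w⟫) 0` rather than the support function itself. -/
noncomputable def supportFun (S : Set E) (w : E) : ℝ := ⨆ X ∈ S, ⟪X, w⟫

lemma supportFun_smul (S : Set E) {c : ℝ} (hc : 0 ≤ c) (w : E) :
    supportFun S (c • w) = c * supportFun S w := by
  simp only [supportFun, inner_smul_right, ← smul_eq_mul, Real.smul_iSup_of_nonneg hc]

lemma supportFun_zero (S : Set E) : supportFun S 0 = 0 := by
  simpa using supportFun_smul S le_rfl 0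

lemma bddAbove_range_iSup_inner (hS : IsBounded S) (w : E) :
    BddAbove (Set.range fun X => ⨆ _ : X ∈ S, ⟪X, w⟫) := by
  obtain ⟨R, hR0, hR⟩ := hS.exists_pos_norm_le
  refine ⟨R * ‖w‖, ?_⟩
  rintro _ ⟨X, rfl⟩
  exact Real.iSup_le (fun hX => (real_inner_le_norm X w).trans (by gcongr; exact hR X hX))
    (by positivity)

lemma inner_le_supportFun (hS : IsBounded S) {X : E} (hX : X ∈ S) (w : E) :
    ⟪X, w⟫ ≤ supportFun S w := by
  have h := le_ciSup (bddAbove_range_iSup_inner hS w) X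
  rwa [ciSup_pos hX] at h

lemma supportFun_le_add_mul_norm (hS : IsBounded S) {R : ℝ} (hR0 : 0 ≤ R)
    (hR : ∀ X ∈ S, ‖X‖ ≤ R) (w w' : E) :
    supportFun S w ≤ supportFun S w' + R * ‖w - w'‖ := by
  refine ciSup_le fun X => ?_
  by_cases hX : X ∈ S
  · rw [ciSup_pos hX]
    calc ⟪X, w⟫ = ⟪X, w'⟫ + ⟪X, w - w'⟫ := by rw [← inner_add_right, add_sub_cancel]
      _ ≤ supportFun S w' + R * ‖w - w'‖ := by
        gcongr
        · exact inner_le_supportFun hS hX w'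
        · exact (real_inner_le_norm X _).trans (by gcongr; exact hR X hX)
  · have hzero (v : E) : (⨆ _ : X ∈ S, ⟪X, v⟫) = 0 := by simp [hX]
    have h0 : 0 ≤ supportFun S w' := by
      have h := le_ciSup (bddAbove_range_iSup_inner hS w') X
      rwa [hzero] at h
    rw [hzero]
    positivity

lemma exists_lipschitzWith_supportFun (hS : IsBounded S) :
    ∃ K, LipschitzWith K (supportFun S) := by
  obtain ⟨R, hR0, hR⟩ := hS.exists_pos_norm_le
  refine ⟨R.toNNReal, LipschitzWith.of_le_add_mul' R fun w w' => ?_⟩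
  simpa only [dist_eq_norm] using supportFun_le_add_mul_norm hS hR0.le hR w w'

lemma continuous_supportFun (hS : IsBounded S) : Continuous (supportFun S) :=
  (exists_lipschitzWith_supportFun hS).choose_spec.continuous

end SupportFunction

section Projection

variable {E : Type*} [NormedAddCommGroup E] [InnerProductSpace ℝ E] {K : Set E}

lemma real_inner_sub_le_zero_of_forall_norm_sub_le (hK : Convex ℝ K) {x u : E} (hu : u ∈ K)
    (hmin : ∀ y ∈ K, ‖x - u‖ ≤ ‖x - y‖) {y : E} (hy : y ∈ K) : ⟪x - u, y - u⟫ ≤ 0 := by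
  have : Nonempty K := ⟨⟨u, hu⟩⟩
  refine (norm_eq_iInf_iff_real_inner_le_zero hK hu).mp (le_antisymm ?_ ?_) y hy
  · exact le_ciInf fun w => hmin w w.2
  · exact ciInf_le (f := fun w : K => ‖x - w‖) ⟨0, by rintro _ ⟨w, rfl⟩; exact norm_nonneg _⟩
      ⟨u, hu⟩

lemma norm_sub_sq_le_inner_of_nearest (hK : Convex ℝ K) {P : E → E}
    (hP : ∀ x, P x ∈ K ∧ ∀ y ∈ K, ‖x - P x‖ ≤ ‖x - y‖) (x y : E) :
    ‖P x - P y‖ ^ 2 ≤ ⟪P x - P y, x - y⟫ := by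
  have hx := real_inner_sub_le_zero_of_forall_norm_sub_le hK (hP x).1 (hP x).2 (hP y).1
  have hy := real_inner_sub_le_zero_of_forall_norm_sub_le hK (hP y).1 (hP y).2 (hP x).1
  have expand : ⟪P x - P y, x - y⟫ - ‖P x - P y‖ ^ 2
      = -⟪x - P x, P y - P x⟫ - ⟪y - P y, P x - P y⟫ := by
    rw [← real_inner_self_eq_norm_sq]
    simp only [inner_sub_left, inner_sub_right, real_inner_comm]
    ring
  linarith

lemma norm_nearest_add_sub_sq_le (hK : Convex ℝ K) (hKb : IsBounded K) {P : E → E}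
    (hP : ∀ x, P x ∈ K ∧ ∀ y ∈ K, ‖x - P x‖ ≤ ‖x - y‖) (a w : E) :
    ‖P (a + w) - P a‖ ^ 2 ≤ supportFun K w - ⟪P a, w⟫ := by
  have h := norm_sub_sq_le_inner_of_nearest hK hP (a + w) a
  rw [add_sub_cancel_left, inner_sub_left] at h
  linarith [inner_le_supportFun hKb (hP (a + w)).1 w]

end Projection

section Expectation

variable {E : Type*} [NormedAddCommGroup E] [InnerProductSpace ℝ E]
  [MeasurableSpace E] {S : Set E} {μ : Measure E}

lemma integral_inner_eq_zero [CompleteSpace E] (hμ : Integrable id μ) (hμ0 : ∫ w, w ∂μ = 0)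
    (b : E) : ∫ w, ⟪b, w⟫ ∂μ = 0 := by
  rw [integral_inner (f := fun w => w) hμ b, hμ0, inner_zero_right]

variable [BorelSpace E]

lemma integrable_supportFun (hS : IsBounded S) (hμ : Integrable id μ) :
    Integrable (supportFun S) μ := by
  obtain ⟨K, hK⟩ := exists_lipschitzWith_supportFun hS
  refine (hμ.norm.const_mul K).mono' hK.continuous.aestronglyMeasurable
    (ae_of_all _ fun w => ?_)
  simpa [supportFun_zero] using hK.dist_le_mul w 0

lemma integral_supportFun_nonneg [CompleteSpace E] (hS : IsBounded S) (hS0 : S.Nonempty)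
    (hμ : Integrable id μ) (hμ0 : ∫ w, w ∂μ = 0) : 0 ≤ ∫ w, supportFun S w ∂μ := by
  obtain ⟨X, hX⟩ := hS0
  calc 0 = ∫ w, ⟪X, w⟫ ∂μ := (integral_inner_eq_zero hμ hμ0 X).symm
    _ ≤ ∫ w, supportFun S w ∂μ :=
      integral_mono (hμ.const_inner X) (integrable_supportFun hS hμ)
        (inner_le_supportFun hS hX)

lemma integral_supportFun_map_smul (hS : IsBounded S) {c : ℝ} (hc : 0 ≤ c) :
    ∫ w, supportFun S w ∂(μ.map (c • ·)) = c * ∫ w, supportFun S w ∂μ := by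
  rw [integral_map (measurable_const_smul c).aemeasurable
    (continuous_supportFun hS).aestronglyMeasurable]
  simp only [supportFun_smul S hc, integral_const_mul]

theorem integral_norm_nearest_add_sub_sq_le [CompleteSpace E] (hS : Convex ℝ S)
    (hSb : IsBounded S) {P : E → E} (hP : ∀ x, P x ∈ S ∧ ∀ y ∈ S, ‖x - P x‖ ≤ ‖x - y‖)
    (hμ : Integrable id μ) (hμ0 : ∫ w, w ∂μ = 0) (a : E) :
    ∫ w, ‖P (a + w) - P a‖ ^ 2 ∂μ ≤ ∫ w, supportFun S w ∂μ := by
  have hinner : Integrable (fun w => ⟪P a, w⟫) μ := hμ.const_inner _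
  calc ∫ w, ‖P (a + w) - P a‖ ^ 2 ∂μ ≤ ∫ w, (supportFun S w - ⟪P a, w⟫) ∂μ :=
        integral_mono_of_nonneg (ae_of_all _ fun _ => by positivity)
          ((integrable_supportFun hSb hμ).sub hinner)
          (ae_of_all _ (norm_nearest_add_sub_sq_le hS hSb hP a))
    _ = ∫ w, supportFun S w ∂μ := by
      rw [integral_sub (integrable_supportFun hSb hμ) hinner,
        integral_inner_eq_zero hμ hμ0, sub_zero]

end Expectation

section Gaussian

variable {n : ℕ}

lemma stdGaussianE_eq_stdGaussian : stdGaussianE n = stdGaussian (EuclideanSpace ℝ (Fin n)) :=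
  map_pi_eq_stdGaussian

lemma gaussianE_eq_map_smul (v : NNReal) :
    gaussianE n v = (stdGaussianE n).map (Real.sqrt v • ·) := by
  have hpi : Measure.pi (fun _ : Fin n => gaussianReal 0 v)
      = (Measure.pi fun _ : Fin n => gaussianReal 0 1).map (fun x i => Real.sqrt v * x i) := by
    rw [Measure.pi_map_pi fun _ => (measurable_const_mul _).aemeasurable]
    congr! with i
    rw [gaussianReal_map_const_mul]
    ext1
    simp [Real.sq_sqrt v.coe_nonneg]
  rw [gaussianE, stdGaussianE, hpi, Measure.map_map (by fun_prop) (by fun_prop),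
    Measure.map_map (by fun_prop) (by fun_prop)]
  rfl

lemma integrable_id_gaussianE (v : NNReal) : Integrable id (gaussianE n v) := by
  rw [gaussianE_eq_map_smul, integrable_map_measure (by fun_prop) (by fun_prop),
    stdGaussianE_eq_stdGaussian]
  exact (IsGaussian.integrable_id (μ := stdGaussian _)).smul (Real.sqrt v)

lemma integral_id_gaussianE (v : NNReal) : ∫ w, w ∂(gaussianE n v) = 0 := by
  rw [gaussianE_eq_map_smul, integral_map (by fun_prop) (by fun_prop), integral_smul,
    stdGaussianE_eq_stdGaussian, integral_id_stdGaussian, smul_zero]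

end Gaussian

lemma sqrt_two_mul_mul_sq_div_sq_le {ε Δ : ℝ} (hε : 0 < ε) (hΔ : 0 ≤ Δ) (L : ℝ) :
    Real.sqrt (2 * L * Δ ^ 2 / ε ^ 2) ≤ 8 * Real.sqrt L / (3 * ε) * Δ := by
  refine Real.sqrt_le_iff.mpr ⟨by positivity, ?_⟩
  rcases le_total L 0 with hL | hL
  · calc 2 * L * Δ ^ 2 / ε ^ 2 ≤ 0 :=
          div_nonpos_of_nonpos_of_nonneg (by nlinarith [sq_nonneg Δ]) (sq_nonneg ε)
      _ ≤ _ := sq_nonneg _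
  · rw [div_mul_eq_mul_div, div_pow, mul_pow, mul_pow, Real.sq_sqrt hL,
      div_le_div_iff₀ (by positivity) (by positivity)]
    nlinarith [mul_nonneg (mul_nonneg hL (sq_nonneg Δ)) (sq_nonneg ε)]

theorem perturb_and_project_utility_general
    (n : ℕ) (S : Set (EuclideanSpace ℝ (Fin n)))
    (hScompact : IsCompact S) (hSconvex : Convex ℝ S)
    (proj : EuclideanSpace ℝ (Fin n) → EuclideanSpace ℝ (Fin n))
    (hproj : ∀ x, proj x ∈ S ∧ ∀ y ∈ S, ‖x - proj x‖ ≤ ‖x - y‖)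
    (ε δ Δ : ℝ) (hε : ε ∈ Set.Ioc (0 : ℝ) 1) (hΔ : 0 < Δ)
    (σ2 : NNReal) (hσ2 : (σ2 : ℝ) = 2 * Real.log (2 / δ) * Δ ^ 2 / ε ^ 2)
    (A : EuclideanSpace ℝ (Fin n)) :
    ∫ w, ‖proj (A + w) - proj A‖ ^ 2 ∂(gaussianE n σ2)
      ≤ 8 * Real.sqrt (Real.log (2 / δ)) / (3 * ε) * Δ * gaussComplexity S := by
  have hSb := hScompact.isBounded
  have hG : 0 ≤ gaussComplexity S := by
    rw [gaussComplexity, stdGaussianE_eq_stdGaussian]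
    exact integral_supportFun_nonneg hSb ⟨_, (hproj 0).1⟩ IsGaussian.integrable_id
      integral_id_stdGaussian
  have hσ : Real.sqrt σ2 ≤ 8 * Real.sqrt (Real.log (2 / δ)) / (3 * ε) * Δ := by
    rw [hσ2]
    exact sqrt_two_mul_mul_sq_div_sq_le hε.1 hΔ.le _
  calc ∫ w, ‖proj (A + w) - proj A‖ ^ 2 ∂(gaussianE n σ2)
      ≤ ∫ w, supportFun S w ∂(gaussianE n σ2) :=
        integral_norm_nearest_add_sub_sq_le hSconvex hSb hproj (integrable_id_gaussianE σ2)
          (integral_id_gaussianE σ2) A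
    _ = Real.sqrt σ2 * gaussComplexity S := by
      rw [gaussianE_eq_map_smul, integral_supportFun_map_smul hSb (Real.sqrt_nonneg _)]
      rfl
    _ ≤ _ := mul_le_mul_of_nonneg_right hσ hG

/-- Utility of perturb-and-project: with `W ∼ N(0, σ²·Id_n)`,
`σ² = 2·log(2/δ)·Δ²/ε²`, the output `Π̂ = Π_S(A + W)` satisfies
`E ‖Π̂ − Π_S(A)‖² ≤ (8√(log(2/δ))/(3ε))·Δ·G(S)`. -/
theorem perturb_and_project_utility
    (n : ℕ) (S : Set (EuclideanSpace ℝ (Fin n)))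
    (hS : S.Nonempty) (hScompact : IsCompact S) (hSconvex : Convex ℝ S)
    (proj : EuclideanSpace ℝ (Fin n) → EuclideanSpace ℝ (Fin n))
    (hproj : ∀ x, proj x ∈ S ∧ ∀ y ∈ S, ‖x - proj x‖ ≤ ‖x - y‖)
    (ε δ Δ : ℝ) (hε : ε ∈ Set.Ioc (0 : ℝ) 1) (hδ : δ ∈ Set.Ioc (0 : ℝ) 1) (hΔ : 0 < Δ)
    (σ2 : NNReal) (hσ2 : (σ2 : ℝ) = 2 * Real.log (2 / δ) * Δ ^ 2 / ε ^ 2)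
    (A : EuclideanSpace ℝ (Fin n)) :
    ∫ w, ‖proj (A + w) - proj A‖ ^ 2 ∂(gaussianE n σ2)
      ≤ 8 * Real.sqrt (Real.log (2 / δ)) / (3 * ε) * Δ * gaussComplexity S :=
  perturb_and_project_utility_general n S hScompact hSconvex proj hproj ε δ Δ hε hΔ σ2 hσ2 A
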